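/- arXiv:1908.04867 — 2 statements merged into one kernel-verified Lean document; each statement's English description precedes it below -/
import Mathlib

section
/- Let p, d, l, a, φ be real numbers with φ ≠ 1 and l ≠ 0. Then δ = a / ((1 − φ)·l) is the unique real number satisfying the insurer's indifference equation φ·(p − d − l − a) + (1 − φ)·(δ·(p − d − a) + (1 − δ)·(p − l − a)) = φ·(p − d − l) + (1 − φ)·(δ·(p − d − l) + (1 − δ)·(p − l)). -/
/-! The audit gain, i.e. the insurer's payoff from auditing minus that from not auditing, is
`(1 − φ)·l·δ − a`: an audit always costs `a`, and it saves the indemnity `l` exactly when the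
policyholder is a non-investing discount-claimant, which happens with probability `(1 − φ)·δ`.
Indifference is the vanishing of this affine function of `δ`, whose slope `(1 − φ)·l` is nonzero. -/

theorem audit_payoff_sub_no_audit_payoff (p d l a φ δ : ℝ) :
    (φ * (p - d - l - a) + (1 - φ) * (δ * (p - d - a) + (1 - δ) * (p - l - a)))
      - (φ * (p - d - l) + (1 - φ) * (δ * (p - d - l) + (1 - δ) * (p - l)))
      = (1 - φ) * l * δ - a := by
  ring

theorem audit_indifference_iff (p d l a φ δ : ℝ) :
    φ * (p - d - l - a) + (1 - φ) * (δ * (p - d - a) + (1 - δ) * (p - l - a))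
      = φ * (p - d - l) + (1 - φ) * (δ * (p - d - l) + (1 - δ) * (p - l))
      ↔ (1 - φ) * l * δ = a := by
  rw [← sub_eq_zero, audit_payoff_sub_no_audit_payoff, sub_eq_zero]

/-- The equilibrium claiming probability `δ = a / ((1 − φ)·l)` is the
unique real number making the insurer indifferent between auditing and not
auditing a breached discount claim. -/
theorem claiming_probability_unique_solution_of_indifference
    (p d l a φ : ℝ) (hφ : φ ≠ 1) (hl : l ≠ 0) :
    ∀ δ : ℝ,
      (φ * (p - d - l - a)
        + (1 - φ) * (δ * (p - d - a) + (1 - δ) * (p - l - a))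
       = φ * (p - d - l)
        + (1 - φ) * (δ * (p - d - l) + (1 - δ) * (p - l)))
      ↔ δ = a / ((1 - φ) * l) := by
  intro δ
  have hslope : (1 - φ) * l ≠ 0 := mul_ne_zero (sub_ne_zero.mpr hφ.symm) hl
  rw [audit_indifference_iff, eq_div_iff hslope, mul_comm]
end

section
/- Let U : ℝ → ℝ be strictly monotone increasing and let W, p, d, l, β be real numbers with l > 0 and β > 0, and set θ* := (U(W − p + d) − U(W − p)) / (β·(U(W − p + d) − U(W − p + d − l))). Then for every real θ, the non-investing policyholder's expected utility from claiming the discount exceeds that from not claiming, i.e. β·θ·U(W − p + d − l) + β·(1 − θ)·U(W − p + d) + (1 − β)·U(W − p + d) > U(W − p), if and only if θ < θ*. (The non-investing policyholder strictly prefers to claim the discount exactly when the insurer's audit probability is below the equilibrium threshold θ*.) -/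
/-! Claiming the discount is a lottery whose expected utility falls linearly in the audit
probability `θ`, with slope `β (U(W − p + d) − U(W − p + d − l))`, which is positive since `U` is
strictly increasing and `l > 0`. A linear function with negative slope exceeds `U(W − p)` exactly
below the point where it crosses that level, and this crossing point is `θ*`. -/

lemma audit_lottery_eq (β θ u v : ℝ) :
    β * θ * u + β * (1 - θ) * v + (1 - β) * v = v - θ * (β * (v - u)) := by
  ring

/-- The non-investing policyholder strictly prefers to claim the
discount iff the insurer's audit probability `θ` is below the equilibrium
threshold `θ*`. -/
theorem claim_preferred_iff_audit_below_threshold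
    (U : ℝ → ℝ) (hU : StrictMono U)
    (W p d l β : ℝ) (hl : l > 0) (hβ : β > 0) :
    ∀ θ : ℝ,
      (β * θ * U (W - p + d - l) + β * (1 - θ) * U (W - p + d)
        + (1 - β) * U (W - p + d) > U (W - p))
      ↔ θ < (U (W - p + d) - U (W - p))
              / (β * (U (W - p + d) - U (W - p + d - l))) := by
  intro θ
  have hloss : U (W - p + d - l) < U (W - p + d) := hU (by linarith)
  have hslope : 0 < β * (U (W - p + d) - U (W - p + d - l)) := mul_pos hβ (sub_pos.2 hloss)
  rw [gt_iff_lt, audit_lottery_eq, lt_sub_comm, lt_div_iff₀ hslope]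
end
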